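/- arXiv:0810.3755 — 2 statements merged into one kernel-verified Lean document; each statement's English description precedes it below -/
import Mathlib

section
/- Let ζ_i: [0, ∞) → X (i = 1, 2) be two geodesic rays in a proper CAT(0)-space X with the same endpoint ζ₁(∞) = ζ₂(∞) in ∂X. Let s ∈ [1, ∞) be such that p = τ_B(ζ₁(s), ζ₁, ζ₂) ≥ 1. Then τ_B(ζ₁(s+t), ζ₁, ζ₂) ≥ p + t − 12B − 4 for all t ≥ 0. -/
open Metric Set Filter Topology
open scoped ENNReal Classical Pointwise

noncomputable section

universe u

/-! ## Proper CAT(0) spaces -/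

/-- A geodesic metric space satisfying the CAT(0) comparison inequality
(in the form of the Bruhat–Tits CN-inequality for midpoints). -/
class CAT0Space (X : Type u) [MetricSpace X] : Prop where
  exists_geodesic : ∀ x y : X, ∃ γ : ℝ → X, γ 0 = x ∧ γ (dist x y) = y ∧
    ∀ s ∈ Set.Icc (0 : ℝ) (dist x y), ∀ t ∈ Set.Icc (0 : ℝ) (dist x y),
      dist (γ s) (γ t) = |s - t|
  cn_ineq : ∀ x y z m : X, dist y m = dist y z / 2 → dist z m = dist y z / 2 →
    dist x m ^ 2 ≤ dist x y ^ 2 / 2 + dist x z ^ 2 / 2 - dist y z ^ 2 / 4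

variable {X : Type u} [MetricSpace X]

/-- `γ` restricted to the (closed connected) set `J ⊆ ℝ` is a unit-speed geodesic. -/
def GeodesicOn (γ : ℝ → X) (J : Set ℝ) : Prop :=
  ∀ s ∈ J, ∀ t ∈ J, dist (γ s) (γ t) = |s - t|

/-- The set of points of `A` closest to `x` (the shortest-distance projection of `x` to `A`). -/
def projSet (A : Set X) (x : X) : Set X :=
  {p | p ∈ A ∧ dist x p = Metric.infDist x A}

/-- A geodesic `γ : J → X` is `B`-contracting if the shortest-distance projection to it of
any closed metric ball disjoint from it has diameter at most `B`. -/
def ContractingOn (B : ℝ) (γ : ℝ → X) (J : Set ℝ) : Prop :=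
  GeodesicOn γ J ∧ ∀ (z : X) (r : ℝ),
    Disjoint (Metric.closedBall z r) (γ '' J) →
    EMetric.diam (⋃ x ∈ Metric.closedBall z r, projSet (γ '' J) x) ≤ ENNReal.ofReal B

/-! ## The visual boundary, realized as the horofunction boundary inside `C(X, ℝ)`
(for proper CAT(0)-spaces the two compactifications agree). -/

/-- The embedding `x ↦ (z ↦ d(x,z) - d(x,o))` of `X` into `C(X, ℝ)`. -/
def bcomp (o : X) (x : X) : C(X, ℝ) :=
  ⟨fun z => dist x z - dist x o, (continuous_const.dist continuous_id).sub continuous_const⟩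

/-- The compactification `X ∪ ∂X` of `X`, realized inside `C(X, ℝ)`. -/
def compactifn (o : X) : Set C(X, ℝ) := closure (Set.range (bcomp o))

/-- The visual boundary `∂X` of `X`, realized inside `C(X, ℝ)` as the set of
(normalized) Busemann functions. -/
def bdry (o : X) : Set C(X, ℝ) := closure (Set.range (bcomp o)) \ Set.range (bcomp o)

/-- The natural action of an isometry `g` of `X` on the compactification; on boundary points
it is the induced boundary homeomorphism. -/
def boundaryAct (o : X) (g : X ≃ᵢ X) (ξ : C(X, ℝ)) : C(X, ℝ) :=
  ⟨fun z => ξ (g.symm z) - ξ (g.symm o),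
    (ξ.continuous.comp g.symm.continuous).sub continuous_const⟩

/-- `γ(-∞) = ξ`: the geodesic `γ` emanates from the boundary point `ξ`. -/
def BeginsAt (o : X) (γ : ℝ → X) (ξ : C(X, ℝ)) : Prop :=
  Filter.Tendsto (fun t => bcomp o (γ t)) Filter.atBot (nhds ξ)

/-- `γ(∞) = ξ`: the geodesic (ray) `γ` ends at the boundary point `ξ`. -/
def EndsAt (o : X) (γ : ℝ → X) (ξ : C(X, ℝ)) : Prop :=
  Filter.Tendsto (fun t => bcomp o (γ t)) Filter.atTop (nhds ξ)

/-- The set of (forward or backward) endpoints at infinity of a geodesic. -/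
def endpointsSet (o : X) (γ : ℝ → X) : Set C(X, ℝ) :=
  {ξ | EndsAt o γ ξ ∨ BeginsAt o γ ξ}

/-- Two geodesics share at most one endpoint in `∂X`. -/
def ShareAtMostOneEnd (o : X) (ζ₁ ζ₂ : ℝ → X) : Prop :=
  Set.Subsingleton (endpointsSet o ζ₁ ∩ endpointsSet o ζ₂)

/-- The shortest-distance projection of a boundary point `ξ` to a geodesic `γ : J → X`:
the set of points of `γ(J)` where the Busemann function of `ξ` restricted to `γ(J)`
attains its minimum. -/
def projSetBdry (γ : ℝ → X) (J : Set ℝ) (ξ : C(X, ℝ)) : Set X :=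
  {y | ∃ t ∈ J, y = γ t ∧ ∀ s ∈ J, ξ (γ t) ≤ ξ (γ s)}

/-! ## The isometry group with the compact-open topology -/

instance isometryEquivTopologicalSpace (X : Type u) [MetricSpace X] :
    TopologicalSpace (X ≃ᵢ X) :=
  TopologicalSpace.induced
    (fun g : X ≃ᵢ X =>
      ((⟨⇑g, g.continuous⟩ : C(X, X)), (⟨⇑g.symm, g.symm.continuous⟩ : C(X, X))))
    inferInstance

/-- The limit set of a subgroup of the isometry group: the set of accumulation points in
`∂X` of an orbit. -/
def limitSet (o : X) (Gs : Subgroup (X ≃ᵢ X)) : Set C(X, ℝ) :=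
  bdry o ∩ closure (Set.range fun g : Gs => bcomp o ((g : X ≃ᵢ X) o))

/-- A subgroup of the isometry group is non-elementary if its limit set contains at least
three points and it fixes no point of `∂X`. -/
def IsNonElementary (o : X) (Gs : Subgroup (X ≃ᵢ X)) : Prop :=
  (∃ a ∈ limitSet o Gs, ∃ b ∈ limitSet o Gs, ∃ c ∈ limitSet o Gs, a ≠ b ∧ a ≠ c ∧ b ≠ c) ∧
  ¬ ∃ ξ ∈ bdry o, ∀ g : Gs, boundaryAct o (g : X ≃ᵢ X) ξ = ξ

/-- A subgroup of the isometry group is elementary if its limit set contains at most two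
points or it fixes a point of `∂X`. -/
def IsElementary (o : X) (Gs : Subgroup (X ≃ᵢ X)) : Prop :=
  (∃ a b : C(X, ℝ), limitSet o Gs ⊆ {a, b}) ∨
  ∃ ξ ∈ bdry o, ∀ g : Gs, boundaryAct o (g : X ≃ᵢ X) ξ = ξ

/-- A rank-one isometry: an axial isometry admitting a `B`-contracting axis for some `B > 0`. -/
def IsRankOneIsom (g : X ≃ᵢ X) : Prop :=
  ∃ (γ : ℝ → X) (τ B : ℝ), 0 < τ ∧ 0 < B ∧ ContractingOn B γ Set.univ ∧
    (∀ t : ℝ, g (γ t) = γ (t + τ)) ∧ ∀ x : X, τ ≤ dist x (g x)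

/-- A rank-one isometry together with its attracting fixed point `a` and repelling fixed
point `b` at infinity (the endpoints of a contracting axis). -/
def IsRankOneWithEnds (o : X) (g : X ≃ᵢ X) (a b : C(X, ℝ)) : Prop :=
  ∃ (γ : ℝ → X) (τ B : ℝ), 0 < τ ∧ 0 < B ∧ ContractingOn B γ Set.univ ∧
    (∀ t : ℝ, g (γ t) = γ (t + τ)) ∧ (∀ x : X, τ ≤ dist x (g x)) ∧
    BeginsAt o γ b ∧ EndsAt o γ a

/-- `G` acts transitively on the complement of the diagonal in `Λ × Λ`. -/
def TransOnPairs (o : X) (Gs : Subgroup (X ≃ᵢ X)) : Prop :=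
  ∀ ξ η ξ' η' : C(X, ℝ), ξ ∈ limitSet o Gs → η ∈ limitSet o Gs →
    ξ' ∈ limitSet o Gs → η' ∈ limitSet o Gs → ξ ≠ η → ξ' ≠ η' →
    ∃ g ∈ Gs, boundaryAct o g ξ = ξ' ∧ boundaryAct o g η = η'

/-- The set `𝒜(B)` of ordered pairs of distinct boundary points which are connected by a
`B`-contracting geodesic. -/
def ABSet (o : X) (B : ℝ) : Set (C(X, ℝ) × C(X, ℝ)) :=
  {p | p.1 ≠ p.2 ∧ ∃ γ : ℝ → X, ContractingOn B γ Set.univ ∧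
    BeginsAt o γ p.1 ∧ EndsAt o γ p.2}

/-- The action of an isometry on ordered pairs of boundary points. -/
def pairAct (o : X) (g : X ≃ᵢ X) (p : C(X, ℝ) × C(X, ℝ)) : C(X, ℝ) × C(X, ℝ) :=
  (boundaryAct o g p.1, boundaryAct o g p.2)

/-- The action of an isometry on triples of boundary points. -/
def tripleAct (o : X) (g : X ≃ᵢ X) (t : C(X, ℝ) × C(X, ℝ) × C(X, ℝ)) :
    C(X, ℝ) × C(X, ℝ) × C(X, ℝ) :=
  (boundaryAct o g t.1, boundaryAct o g t.2.1, boundaryAct o g t.2.2)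

/-! ## The quantity `τ_B` -/

/-- The set of parameters where `ζ₁` is `(6B+2)`-close to `ζ₂(J₂)`. -/
def nearSet (B : ℝ) (ζ₁ : ℝ → X) (J₁ : Set ℝ) (ζ₂ : ℝ → X) (J₂ : Set ℝ) : Set ℝ :=
  {t | t ∈ J₁ ∧ Metric.infDist (ζ₁ t) (ζ₂ '' J₂) ≤ 6 * B + 2}

/-- The parameter of the shortest-distance projection of `x` to the geodesic `γ : J → X`
(the projection point is unique in a CAT(0)-space). -/
def projParam (γ : ℝ → X) (J : Set ℝ) (x : X) : ℝ :=
  sInf {t | t ∈ J ∧ dist x (γ t) = Metric.infDist x (γ '' J)}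

/-- The quantity `τ_B(x, ζ₁, ζ₂)` of the paper, measuring the overlap, as seen from the
projections of `x`, of the `(6B+2)`-fellow-travelling portions of the oriented geodesics
`ζ₁ : J₁ → X` and `ζ₂ : J₂ → X`. -/
def tauB (B : ℝ) (x : X) (ζ₁ : ℝ → X) (J₁ : Set ℝ) (ζ₂ : ℝ → X) (J₂ : Set ℝ) : ℝ :=
  let N₁ := nearSet B ζ₁ J₁ ζ₂ J₂
  let N₂ := nearSet B ζ₂ J₂ ζ₁ J₁
  let p₁ := projParam ζ₁ J₁ x
  let p₂ := projParam ζ₂ J₂ x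
  let aE : Set ℝ → EReal := fun N => if BddBelow N then ((sInf N : ℝ) : EReal) else ⊥
  let bE : Set ℝ → EReal := fun N => if BddAbove N then ((sSup N : ℝ) : EReal) else ⊤
  let s₁ : EReal := if BddBelow N₂ then ((projParam ζ₁ J₁ (ζ₂ (sInf N₂)) : ℝ) : EReal) else ⊥
  let t₁ : EReal := if BddAbove N₂ then ((projParam ζ₁ J₁ (ζ₂ (sSup N₂)) : ℝ) : EReal) else ⊤
  let s₂ : EReal := if BddBelow N₁ then ((projParam ζ₂ J₂ (ζ₁ (sInf N₁)) : ℝ) : EReal) else ⊥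
  let t₂ : EReal := if BddAbove N₁ then ((projParam ζ₂ J₂ (ζ₁ (sSup N₁)) : ℝ) : EReal) else ⊤
  let dA₁ : ℝ≥0∞ := if BddBelow N₁ then ENNReal.ofReal (dist (ζ₁ p₁) (ζ₁ (sInf N₁))) else ⊤
  let dB₁ : ℝ≥0∞ := if BddAbove N₁ then ENNReal.ofReal (dist (ζ₁ p₁) (ζ₁ (sSup N₁))) else ⊤
  let dA₂ : ℝ≥0∞ := if BddBelow N₂ then ENNReal.ofReal (dist (ζ₂ p₂) (ζ₂ (sInf N₂))) else ⊤
  let dB₂ : ℝ≥0∞ := if BddAbove N₂ then ENNReal.ofReal (dist (ζ₂ p₂) (ζ₂ (sSup N₂))) else ⊤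
  if N₁.Nonempty ∧ N₂.Nonempty ∧ s₁ < t₁ ∧ s₂ < t₂ ∧
      aE N₁ ≤ (p₁ : EReal) ∧ (p₁ : EReal) ≤ bE N₁ ∧
      aE N₂ ≤ (p₂ : EReal) ∧ (p₂ : EReal) ≤ bE N₂ then
    (min (min dA₁ dB₁) (min dA₂ dB₂)).toReal
  else 0

/-- `τ_B(x, α₁, α₂)` for pairs `α₁, α₂ ∈ 𝒜(B)`: the infimum of `τ_B(x, ζ₁, ζ₂)` over all
`B`-contracting geodesics `ζᵢ` connecting the two components of `αᵢ`. -/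
def tauBPair (o : X) (B : ℝ) (x : X) (α₁ α₂ : C(X, ℝ) × C(X, ℝ)) : ℝ :=
  sInf {r | ∃ ζ₁ ζ₂ : ℝ → X,
    ContractingOn B ζ₁ Set.univ ∧ BeginsAt o ζ₁ α₁.1 ∧ EndsAt o ζ₁ α₁.2 ∧
    ContractingOn B ζ₂ Set.univ ∧ BeginsAt o ζ₂ α₂.1 ∧ EndsAt o ζ₂ α₂.2 ∧
    r = tauB B x ζ₁ Set.univ ζ₂ Set.univ}

/-- The Gromov-product-like kernel `δ̃_x(α₁, α₂) = e^{-χ τ_B(x, α₁, α₂)}` on `𝒜(B)`. -/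
def tildeDelta (o : X) (B χ : ℝ) (x : X) (α β : C(X, ℝ) × C(X, ℝ)) : ℝ :=
  if α = β then 0 else Real.exp (-(χ * tauBPair o B x α β))

/-- The family of distances `{δ_x}` on `𝒜(B)` of Corollary `deltadistance`:
a family of genuine distance functions inducing the subspace topology, invariant under the
involution `ι` and the isometry group, uniformly comparable to `δ̃_x`, and moving
uniformly Lipschitz-continuously (in the multiplicative sense) with the basepoint `x`. -/
def IsDeltaFamily (o : X) (B χ c₀ : ℝ)
    (δ : X → ↥(ABSet o B) → ↥(ABSet o B) → ℝ) : Prop :=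
  (∀ x α β, 0 ≤ δ x α β) ∧
  (∀ x α β, δ x α β = 0 ↔ α = β) ∧
  (∀ x α β, δ x α β = δ x β α) ∧
  (∀ x α β γ', δ x α γ' ≤ δ x α β + δ x β γ') ∧
  (∀ (x : X) (s : Set ↥(ABSet o B)),
      IsOpen s ↔ ∀ a ∈ s, ∃ ε > 0, ∀ b, δ x a b < ε → b ∈ s) ∧
  (∀ (x : X) (a : ↥(ABSet o B)), ∃ ε > 0, IsCompact {b | δ x a b ≤ ε}) ∧
  (∀ (x : X) (α β : ↥(ABSet o B)) (hα : ((α : C(X, ℝ) × C(X, ℝ)).2,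
      (α : C(X, ℝ) × C(X, ℝ)).1) ∈ ABSet o B)
      (hβ : ((β : C(X, ℝ) × C(X, ℝ)).2, (β : C(X, ℝ) × C(X, ℝ)).1) ∈ ABSet o B),
      δ x ⟨((α : C(X, ℝ) × C(X, ℝ)).2, (α : C(X, ℝ) × C(X, ℝ)).1), hα⟩
        ⟨((β : C(X, ℝ) × C(X, ℝ)).2, (β : C(X, ℝ) × C(X, ℝ)).1), hβ⟩ = δ x α β) ∧
  (∀ (x : X) (α β : ↥(ABSet o B)),
      c₀ * tildeDelta o B χ x (↑α) (↑β) ≤ δ x α β ∧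
      δ x α β ≤ tildeDelta o B χ x (↑α) (↑β)) ∧
  (∀ (x y : X) (α β : ↥(ABSet o B)),
      Real.exp (-(χ * dist x y)) * δ x α β ≤ δ y α β ∧
      δ y α β ≤ Real.exp (χ * dist x y) * δ x α β) ∧
  (∀ (g : X ≃ᵢ X) (x : X) (α β : ↥(ABSet o B))
      (hα : pairAct o g (↑α) ∈ ABSet o B) (hβ : pairAct o g (↑β) ∈ ABSet o B),
      δ (g x) ⟨pairAct o g (↑α), hα⟩ ⟨pairAct o g (↑β), hβ⟩ = δ x α β)

/-! ## Amenability, compact extensions, Lie groups -/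

/-- A topological group is amenable if there is a left-invariant mean on the space of
bounded continuous real functions. -/
def IsAmenableGroup (H : Type u) [Group H] [TopologicalSpace H] : Prop :=
  ∃ m : BoundedContinuousFunction H ℝ →ₗ[ℝ] ℝ,
    m 1 = 1 ∧ (∀ f : BoundedContinuousFunction H ℝ, 0 ≤ f → 0 ≤ m f) ∧
    ∀ (g : H) (f f' : BoundedContinuousFunction H ℝ),
      (∀ x, f' x = f (g * x)) → m f' = m f

/-- A realization of a topological group `G` as a compact extension: a compact normal
subgroup `K` together with a topological group isomorphism `G ⧸ K ≃ L`. -/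
structure CompactExtension (G : Type u) [Group G] [TopologicalSpace G] where
  L : Type u
  [grp : Group L]
  [top : TopologicalSpace L]
  K : Subgroup G
  normal : K.Normal
  isCompact : IsCompact (K : Set G)
  e : (G ⧸ K) ≃* L
  continuous_e : Continuous ⇑e
  continuous_symm : Continuous ⇑e.symm

attribute [instance] CompactExtension.grp CompactExtension.top

/-- Gromov hyperbolicity via the four-point condition. -/
def GromovHyperbolicSpace (Y : Type u) [MetricSpace Y] : Prop :=
  ∃ δ : ℝ, 0 ≤ δ ∧ ∀ x y z w : Y,
    dist x y + dist z w ≤ max (dist x z + dist y w) (dist x w + dist y z) + δ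

/-- A witness that `L` is a rank-one simple Lie group: a faithful continuous, proper,
transitive, isometric action on a non-trivial Gromov hyperbolic proper CAT(0)-space
(its rank-one symmetric space). -/
structure RankOneWitness (L : Type u) [Group L] [TopologicalSpace L] where
  Y : Type u
  [ms : MetricSpace Y]
  proper : ProperSpace Y
  cat0 : CAT0Space Y
  hyperbolic : GromovHyperbolicSpace Y
  nontrivial : ∃ y₀ y₁ : Y, y₀ ≠ y₁
  act : L →* (Y ≃ᵢ Y)
  faithful : Function.Injective ⇑act
  continuous_act : Continuous fun p : L × Y => act p.1 p.2
  proper_act : ∀ K : Set Y, IsCompact K →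
    IsCompact (closure {g : L | ¬ Disjoint (⇑(act g) '' K) K})
  transitive : ∀ y y' : Y, ∃ g : L, act g y = y'

attribute [instance] RankOneWitness.ms

/-- A simple Lie group of rank one (with trivial center), characterized geometrically:
a connected, locally compact, non-compact, topologically simple group acting continuously,
faithfully, properly, transitively and isometrically on a non-trivial Gromov hyperbolic
proper CAT(0)-space. -/
def IsRankOneSimpleLie (L : Type u) [Group L] [TopologicalSpace L] : Prop :=
  IsTopologicalGroup L ∧ ConnectedSpace L ∧ LocallyCompactSpace L ∧ ¬ CompactSpace L ∧
  (∀ N : Subgroup L, N.Normal → IsClosed (N : Set L) → N = ⊥ ∨ N = ⊤) ∧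
  Nonempty (RankOneWitness L)

/-- A witness that `G` is a semisimple Lie group of rank at least two: a continuous, proper,
transitive, isometric action on a proper CAT(0)-space (its symmetric space) which contains
a 2-flat. -/
structure HigherRankWitness (G : Type u) [Group G] [TopologicalSpace G] where
  Y : Type u
  [ms : MetricSpace Y]
  proper : ProperSpace Y
  cat0 : CAT0Space Y
  act : G →* (Y ≃ᵢ Y)
  continuous_act : Continuous fun p : G × Y => act p.1 p.2
  proper_act : ∀ K : Set Y, IsCompact K →
    IsCompact (closure {g : G | ¬ Disjoint (⇑(act g) '' K) K})
  transitive : ∀ y y' : Y, ∃ g : G, act g y = y'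
  twoFlat : ∃ f : ℝ × ℝ → Y, ∀ p q : ℝ × ℝ,
    dist (f p) (f q) = Real.sqrt ((p.1 - q.1) ^ 2 + (p.2 - q.2) ^ 2)

attribute [instance] HigherRankWitness.ms

/-- A connected semisimple Lie group with finite center, no compact factors, and real rank
at least two, characterized geometrically: a connected locally compact group with finite
center whose closed normal amenable subgroups are finite, acting continuously, properly,
transitively and isometrically on a proper CAT(0)-space containing a 2-flat. -/
def IsHigherRankSemisimpleLie (G : Type u) [Group G] [TopologicalSpace G] : Prop :=
  IsTopologicalGroup G ∧ ConnectedSpace G ∧ LocallyCompactSpace G ∧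
  Finite (Subgroup.center G) ∧
  (∀ N : Subgroup G, N.Normal → IsClosed (N : Set G) → IsAmenableGroup ↥N → Finite ↥N) ∧
  Nonempty (HigherRankWitness G)

/-- A lattice in a locally compact group: a discrete subgroup of finite covolume. -/
def IsLatticeIn (G : Type u) [Group G] [TopologicalSpace G] (Γ : Subgroup G) : Prop :=
  DiscreteTopology ↥Γ ∧ IsClosed (Γ : Set G) ∧
  ∃ μ : @MeasureTheory.Measure G (borel G),
    @MeasureTheory.Measure.IsHaarMeasure G _ _ (borel G) μ ∧
    ∃ F : Set G, @MeasurableSet G (borel G) F ∧ μ F < ⊤ ∧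
      (⋃ γ ∈ Γ, (fun x => x * γ) '' F) = Set.univ

/-- An irreducible lattice: the projection of `Γ` to the quotient by every proper
(non-discrete) closed normal subgroup is dense. -/
def IsIrreducibleLattice (G : Type u) [Group G] [TopologicalSpace G] (Γ : Subgroup G) : Prop :=
  ∀ N : Subgroup G, N.Normal → IsClosed (N : Set G) → ¬ DiscreteTopology ↥N →
    Dense ((N : Set G) * (Γ : Set G))

/-! ## Bounded cohomology in degree two with coefficients in `L^p(G, μ)` -/

section Cohomology

variable {G : Type u} [Group G] [MeasurableSpace G]

/-- A bounded `G`-equivariant `L^p(G,μ)`-valued 2-cochain (for the homogeneous resolution),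
described by its values: a function `G² → L^p(G, μ)` which is uniformly `L^p`-bounded and
equivariant for the left regular representation. -/
def IsBddEquivariantCochain2 (μ : MeasureTheory.Measure G) (p : ℝ≥0∞)
    (φ : G → G → G → ℝ) : Prop :=
  (∀ g₀ g₁, MeasureTheory.MemLp (φ g₀ g₁) p μ) ∧
  (∃ C : ℝ≥0∞, C ≠ ⊤ ∧ ∀ g₀ g₁, MeasureTheory.eLpNorm (φ g₀ g₁) p μ ≤ C) ∧
  (∀ g g₀ g₁, (fun h => φ (g * g₀) (g * g₁) h) =ᵐ[μ] fun h => φ g₀ g₁ (g⁻¹ * h))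

/-- A bounded `G`-equivariant `L^p(G,μ)`-valued 3-cochain. -/
def IsBddEquivariantCochain3 (μ : MeasureTheory.Measure G) (p : ℝ≥0∞)
    (ω : G → G → G → G → ℝ) : Prop :=
  (∀ g₀ g₁ g₂, MeasureTheory.MemLp (ω g₀ g₁ g₂) p μ) ∧
  (∃ C : ℝ≥0∞, C ≠ ⊤ ∧ ∀ g₀ g₁ g₂, MeasureTheory.eLpNorm (ω g₀ g₁ g₂) p μ ≤ C) ∧
  (∀ g g₀ g₁ g₂, (fun h => ω (g * g₀) (g * g₁) (g * g₂) h) =ᵐ[μ] fun h => ω g₀ g₁ g₂ (g⁻¹ * h))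

/-- The homogeneous 2-cocycle identity. -/
def IsCocycle3 (μ : MeasureTheory.Measure G) (ω : G → G → G → G → ℝ) : Prop :=
  ∀ g₀ g₁ g₂ g₃,
    (fun h => ω g₁ g₂ g₃ h - ω g₀ g₂ g₃ h + ω g₀ g₁ g₃ h - ω g₀ g₁ g₂ h)
      =ᵐ[μ] fun _ => (0 : ℝ)

/-- `ω` is the coboundary of the 2-cochain `φ`. -/
def IsCoboundaryOf (μ : MeasureTheory.Measure G) (ω : G → G → G → G → ℝ)
    (φ : G → G → G → ℝ) : Prop :=
  ∀ g₀ g₁ g₂, ω g₀ g₁ g₂ =ᵐ[μ] fun h => φ g₁ g₂ h - φ g₀ g₂ h + φ g₀ g₁ h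

/-- Non-vanishing of `H²_b(G, L^p(G, μ))` (with `G` regarded as a discrete group):
there is a bounded equivariant cocycle which is not the coboundary of any bounded
equivariant cochain. -/
def H2bNontrivial (μ : MeasureTheory.Measure G) (p : ℝ≥0∞) : Prop :=
  ∃ ω : G → G → G → G → ℝ, IsBddEquivariantCochain3 μ p ω ∧ IsCocycle3 μ ω ∧
    ¬ ∃ φ : G → G → G → ℝ, IsBddEquivariantCochain2 μ p φ ∧ IsCoboundaryOf μ ω φ

/-- Infinite-dimensionality of `H²_b(G, L^p(G, μ))`: a sequence of bounded equivariant
cocycles whose classes are linearly independent. -/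
def H2bInfiniteDimensional (μ : MeasureTheory.Measure G) (p : ℝ≥0∞) : Prop :=
  ∃ ω : ℕ → G → G → G → G → ℝ,
    (∀ n, IsBddEquivariantCochain3 μ p (ω n) ∧ IsCocycle3 μ (ω n)) ∧
    ∀ (s : Finset ℕ) (c : ℕ → ℝ),
      (∃ φ : G → G → G → ℝ, IsBddEquivariantCochain2 μ p φ ∧
        IsCoboundaryOf μ (fun g₀ g₁ g₂ h => ∑ n ∈ s, c n * ω n g₀ g₁ g₂ h) φ) →
      ∀ n ∈ s, c n = 0

variable [TopologicalSpace G]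

/-- Continuity of a 2-cochain as a map `G² → L^p(G, μ)`. -/
def IsLpContinuous2 (μ : MeasureTheory.Measure G) (p : ℝ≥0∞) (φ : G → G → G → ℝ) : Prop :=
  ∀ t₀ : G × G, Filter.Tendsto
    (fun t : G × G => MeasureTheory.eLpNorm (fun h => φ t.1 t.2 h - φ t₀.1 t₀.2 h) p μ)
    (nhds t₀) (nhds 0)

/-- Continuity of a 3-cochain as a map `G³ → L^p(G, μ)`. -/
def IsLpContinuous3 (μ : MeasureTheory.Measure G) (p : ℝ≥0∞) (ω : G → G → G → G → ℝ) : Prop :=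
  ∀ t₀ : G × G × G, Filter.Tendsto
    (fun t : G × G × G =>
      MeasureTheory.eLpNorm (fun h => ω t.1 t.2.1 t.2.2 h - ω t₀.1 t₀.2.1 t₀.2.2 h) p μ)
    (nhds t₀) (nhds 0)

/-- Non-vanishing of the continuous bounded cohomology `H²_cb(G, L^p(G, μ))`. -/
def H2cbNontrivial (μ : MeasureTheory.Measure G) (p : ℝ≥0∞) : Prop :=
  ∃ ω : G → G → G → G → ℝ, IsBddEquivariantCochain3 μ p ω ∧ IsLpContinuous3 μ p ω ∧
    IsCocycle3 μ ω ∧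
    ¬ ∃ φ : G → G → G → ℝ, IsBddEquivariantCochain2 μ p φ ∧ IsLpContinuous2 μ p φ ∧
      IsCoboundaryOf μ ω φ

end Cohomology

/-! ## Triples and the cocycle of Theorem `cocycle` -/

/-- The set `T(B)` of triples of pairwise distinct points of the limit set whose pairs are
connected by `B`-contracting geodesics. -/
def TSet (o : X) (Gs : Subgroup (X ≃ᵢ X)) (B : ℝ) :
    Set (C(X, ℝ) × C(X, ℝ) × C(X, ℝ)) :=
  {t | t.1 ∈ limitSet o Gs ∧ t.2.1 ∈ limitSet o Gs ∧ t.2.2 ∈ limitSet o Gs ∧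
    (t.1, t.2.1) ∈ ABSet o B ∧ (t.2.1, t.2.2) ∈ ABSet o B ∧ (t.2.2, t.1) ∈ ABSet o B}

/-- The set of triples of pairwise distinct points of the limit set. -/
def TripleSet (o : X) (Gs : Subgroup (X ≃ᵢ X)) : Set (C(X, ℝ) × C(X, ℝ) × C(X, ℝ)) :=
  {t | t.1 ∈ limitSet o Gs ∧ t.2.1 ∈ limitSet o Gs ∧ t.2.2 ∈ limitSet o Gs ∧
    t.1 ≠ t.2.1 ∧ t.1 ≠ t.2.2 ∧ t.2.1 ≠ t.2.2}

/-- The 2-cocycle `ω(σ, η, β) = α(σ, η) + α(η, β) + α(β, σ)` associated to a map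
`α : 𝒜(B) → C_b(G × G)`. -/
def omegaOf {o : X} {Gs : Subgroup (X ≃ᵢ X)} {B : ℝ}
    (α : ↥(ABSet o B) → BoundedContinuousFunction (↥Gs × ↥Gs) ℝ)
    (τ : ↥(TSet o Gs B)) : ↥Gs × ↥Gs → ℝ :=
  fun z =>
    α ⟨((τ : C(X, ℝ) × C(X, ℝ) × C(X, ℝ)).1, (τ : C(X, ℝ) × C(X, ℝ) × C(X, ℝ)).2.1),
        τ.2.2.2.2.1⟩ z +
    α ⟨((τ : C(X, ℝ) × C(X, ℝ) × C(X, ℝ)).2.1, (τ : C(X, ℝ) × C(X, ℝ) × C(X, ℝ)).2.2),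
        τ.2.2.2.2.2.1⟩ z +
    α ⟨((τ : C(X, ℝ) × C(X, ℝ) × C(X, ℝ)).2.2, (τ : C(X, ℝ) × C(X, ℝ) × C(X, ℝ)).1),
        τ.2.2.2.2.2.2⟩ z

/-- The subset `𝒫_{≥3}(Λ)` of probability measures on the compactification which are
supported on `Λ` and not concentrated on at most two points. -/
def PThree (o : X) (Gs : Subgroup (X ≃ᵢ X)) [MeasurableSpace C(X, ℝ)] :
    Set (MeasureTheory.ProbabilityMeasure C(X, ℝ)) :=
  {ν | ν.toMeasure (limitSet o Gs)ᶜ = 0 ∧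
    ∀ a b : C(X, ℝ), ν.toMeasure {a, b} < 1}

/-! ## Hadamard-manifold notions for Corollary `rankrig` -/

/-- Geodesic completeness: every nontrivial geodesic segment extends to a biinfinite
geodesic line. -/
def GeodesicallyComplete (X : Type u) [MetricSpace X] : Prop :=
  ∀ (γ : ℝ → X) (a b : ℝ), a < b → GeodesicOn γ (Set.Icc a b) →
    ∃ γ' : ℝ → X, GeodesicOn γ' Set.univ ∧ ∀ t ∈ Set.Icc a b, γ' t = γ t

/-- `X` is a (globally) symmetric space: the geodesic symmetry at every point extends to
an isometry of `X`. -/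
def IsSymmetricSpace (X : Type u) [MetricSpace X] : Prop :=
  ∀ p : X, ∃ σ : X ≃ᵢ X, σ p = p ∧
    ∀ γ : ℝ → X, GeodesicOn γ Set.univ → γ 0 = p → ∀ t : ℝ, σ (γ t) = γ (-t)

/-- `X` is irreducible: it is not isometric to a non-trivial product (with the
Pythagorean/ℓ² product metric). -/
def IsIrreducibleMetricSpace (X : Type u) [MetricSpace X] : Prop :=
  ¬ ∃ (Y Z : Type u) (_ : MetricSpace Y) (_ : MetricSpace Z) (f : X ≃ Y × Z),
      (∃ y y' : Y, y ≠ y') ∧ (∃ z z' : Z, z ≠ z') ∧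
      ∀ a b : X, dist a b ^ 2 =
        dist (f a).1 (f b).1 ^ 2 + dist (f a).2 (f b).2 ^ 2

/-- An isometry is parabolic if its displacement function does not attain its infimum. -/
def IsParabolicIsom (g : X ≃ᵢ X) : Prop :=
  ¬ ∃ x : X, ∀ y : X, dist x (g x) ≤ dist y (g y)


/-!
Write `K = η (ζ₂ 0) - η (ζ₁ 0)`. Since `η` is `1`-Lipschitz and decreases at unit speed along
both rays, `|u - r - K| ≤ d(ζ₁ r, ζ₂ u)`. Conversely, the CN inequality makes
`v ↦ d(x, ζ v)² - v²` midpoint convex along a ray, and comparing with the Busemann function of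
the ray gives `d(ζ₁ r, ζ₂ u)² ≤ (u - r - K)² + d(ζ₁ 0, ζ₂ 0)² - K²`. Applied to the rays
restarted at `ζ₁ a` and `ζ₂ b`, this shows that `r ↦ d(ζ₁ r, ζ₂)` is non-increasing, so both
`(6B+2)`-near sets are half-lines `[aᵢ, ∞)` and, for `r ≥ a₁`,
`τ_B(ζ₁ r, ζ₁, ζ₂) = min (r - a₁) (π₂(ζ₁ r) - a₂)`, where `π₂` is the projection parameter to
`ζ₂`. By the first inequality `π₂(ζ₁ r) = r + K` up to `6B + 2`, so both terms of the minimum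
grow at least like `r`, up to `12B + 4`.
-/

namespace GeodesicOn

variable {γ : ℝ → X} {J : Set ℝ}

lemma dist_eq_sub (hγ : GeodesicOn γ J) {s t : ℝ} (hs : s ∈ J) (ht : t ∈ J) (hst : s ≤ t) :
    dist (γ t) (γ s) = t - s := by
  rw [hγ t ht s hs, abs_of_nonneg (sub_nonneg.2 hst)]

lemma lipschitzOnWith (hγ : GeodesicOn γ J) : LipschitzOnWith 1 γ J :=
  LipschitzOnWith.of_dist_le_mul fun s hs t ht => by
    rw [hγ s hs t ht, NNReal.coe_one, one_mul, Real.dist_eq]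

lemma continuousOn_dist (hγ : GeodesicOn γ J) (x : X) : ContinuousOn (fun t => dist x (γ t)) J :=
  (continuous_const.dist continuous_id).comp_continuousOn hγ.lipschitzOnWith.continuousOn

lemma comp_const_add (hγ : GeodesicOn γ (Ici 0)) {a : ℝ} (ha : 0 ≤ a) :
    GeodesicOn (fun v => γ (a + v)) (Ici 0) := fun s hs t ht => by
  simpa using hγ (a + s) (add_nonneg ha hs) (a + t) (add_nonneg ha ht)

lemma projParam_apply (hγ : GeodesicOn γ J) {r : ℝ} (hr : r ∈ J) : projParam γ J (γ r) = r := by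
  have hset : {t | t ∈ J ∧ dist (γ r) (γ t) = infDist (γ r) (γ '' J)} = {r} := by
    ext t
    simp only [mem_ofPred_eq, mem_singleton_iff, infDist_zero_of_mem (mem_image_of_mem γ hr)]
    constructor
    · rintro ⟨ht, hd⟩
      rw [hγ r hr t ht, abs_eq_zero, sub_eq_zero] at hd
      exact hd.symm
    · rintro rfl
      exact ⟨hr, dist_self _⟩
  rw [projParam, hset, csInf_singleton]

lemma exists_dist_eq_infDist (hγ : GeodesicOn γ J) (hJ : IsClosed J) {t₀ : ℝ} (ht₀ : t₀ ∈ J)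
    (x : X) : ∃ t ∈ J, dist x (γ t) = infDist x (γ '' J) := by
  have hf := hγ.continuousOn_dist x
  -- `dist x (γ t) ≥ |t - t₀| - dist x (γ t₀)`, so the function is coercive
  have hcoercive : ∀ᶠ t in cocompact ℝ ⊓ 𝓟 J, dist x (γ t₀) ≤ dist x (γ t) := by
    filter_upwards [((tendsto_dist_right_cocompact_atTop t₀).eventually_ge_atTop
      (2 * dist x (γ t₀))).filter_mono inf_le_left, mem_inf_of_right (mem_principal_self J)]
      with t ht htJ
    have := dist_triangle (γ t) x (γ t₀)
    rw [hγ t htJ t₀ ht₀, ← Real.dist_eq, dist_comm (γ t)] at this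
    linarith
  obtain ⟨t, ht, hmin⟩ := hf.exists_isMinOn' hJ ht₀ hcoercive
  refine ⟨t, ht, le_antisymm ?_ (infDist_le_dist_of_mem (mem_image_of_mem γ ht))⟩
  exact (le_infDist ⟨_, mem_image_of_mem γ ht⟩).2 fun _ ⟨t', ht', hy⟩ => hy ▸ hmin ht'

lemma projParam_spec (hγ : GeodesicOn γ J) (hJ : IsClosed J) (hne : J.Nonempty)
    (hbdd : BddBelow J) (x : X) :
    projParam γ J x ∈ J ∧ dist x (γ (projParam γ J x)) = infDist x (γ '' J) := by
  obtain ⟨t, ht, hd⟩ := hγ.exists_dist_eq_infDist hJ hne.some_mem x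
  have hclosed : IsClosed {t | t ∈ J ∧ dist x (γ t) = infDist x (γ '' J)} :=
    (hγ.continuousOn_dist x).preimage_isClosed_of_isClosed hJ isClosed_singleton
  exact hclosed.csInf_mem ⟨t, ht, hd⟩ (hbdd.mono fun _ h => h.1)

end GeodesicOn

lemma isClosed_nearSet {B : ℝ} {ζ₁ ζ₂ : ℝ → X} {J₁ J₂ : Set ℝ} (h₁ : GeodesicOn ζ₁ J₁)
    (hJ₁ : IsClosed J₁) : IsClosed (nearSet B ζ₁ J₁ ζ₂ J₂) :=
  ((continuous_infDist_pt _).comp_continuousOn h₁.lipschitzOnWith.continuousOn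
    ).preimage_isClosed_of_isClosed hJ₁ isClosed_Iic

section TauB

variable {B : ℝ} {x : X} {ζ₁ ζ₂ : ℝ → X} {J₁ J₂ : Set ℝ}

lemma sInf_nearSet_le_projParam_of_tauB_ne_zero (h : tauB B x ζ₁ J₁ ζ₂ J₂ ≠ 0)
    (hb₁ : BddBelow (nearSet B ζ₁ J₁ ζ₂ J₂)) (hb₂ : BddBelow (nearSet B ζ₂ J₂ ζ₁ J₁)) :
    (nearSet B ζ₁ J₁ ζ₂ J₂).Nonempty ∧ (nearSet B ζ₂ J₂ ζ₁ J₁).Nonempty ∧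
      sInf (nearSet B ζ₁ J₁ ζ₂ J₂) ≤ projParam ζ₁ J₁ x ∧
      sInf (nearSet B ζ₂ J₂ ζ₁ J₁) ≤ projParam ζ₂ J₂ x := by
  simp only [tauB, if_pos hb₁, if_pos hb₂] at h
  by_contra hc
  refine h (if_neg ?_)
  rintro ⟨hne₁, hne₂, -, -, ha₁, -, ha₂, -⟩
  exact hc ⟨hne₁, hne₂, EReal.coe_le_coe_iff.1 ha₁, EReal.coe_le_coe_iff.1 ha₂⟩

lemma tauB_eq_min_of_not_bddAbove (hne₁ : (nearSet B ζ₁ J₁ ζ₂ J₂).Nonempty)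
    (hne₂ : (nearSet B ζ₂ J₂ ζ₁ J₁).Nonempty)
    (hb₁ : BddBelow (nearSet B ζ₁ J₁ ζ₂ J₂)) (hb₂ : BddBelow (nearSet B ζ₂ J₂ ζ₁ J₁))
    (hu₁ : ¬BddAbove (nearSet B ζ₁ J₁ ζ₂ J₂)) (hu₂ : ¬BddAbove (nearSet B ζ₂ J₂ ζ₁ J₁))
    (ha₁ : sInf (nearSet B ζ₁ J₁ ζ₂ J₂) ≤ projParam ζ₁ J₁ x)
    (ha₂ : sInf (nearSet B ζ₂ J₂ ζ₁ J₁) ≤ projParam ζ₂ J₂ x) :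
    tauB B x ζ₁ J₁ ζ₂ J₂ =
      min (dist (ζ₁ (projParam ζ₁ J₁ x)) (ζ₁ (sInf (nearSet B ζ₁ J₁ ζ₂ J₂))))
        (dist (ζ₂ (projParam ζ₂ J₂ x)) (ζ₂ (sInf (nearSet B ζ₂ J₂ ζ₁ J₁)))) := by
  simp only [tauB, if_pos hb₁, if_pos hb₂, if_neg hu₁, if_neg hu₂]
  rw [if_pos ⟨hne₁, hne₂, EReal.coe_lt_top _, EReal.coe_lt_top _, EReal.coe_le_coe_iff.2 ha₁,
    le_top, EReal.coe_le_coe_iff.2 ha₂, le_top⟩]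
  simp only [le_top, min_eq_left, ENNReal.toReal_min ENNReal.ofReal_ne_top ENNReal.ofReal_ne_top,
    ENNReal.toReal_ofReal dist_nonneg]

end TauB

namespace EndsAt

variable {o : X} {ζ : ℝ → X} {η : C(X, ℝ)}

lemma tendsto_dist_sub_dist (h : EndsAt o ζ η) (z : X) :
    Tendsto (fun t => dist (ζ t) z - dist (ζ t) o) atTop (𝓝 (η z)) :=
  ((continuous_eval_const z).tendsto η).comp h

lemma sub_le_dist (h : EndsAt o ζ η) (z w : X) : η z - η w ≤ dist z w := by
  refine le_of_tendsto ((h.tendsto_dist_sub_dist z).sub (h.tendsto_dist_sub_dist w))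
    (Eventually.of_forall fun t => ?_)
  linarith [dist_triangle (ζ t) w z, dist_comm w z]

lemma tendsto_dist_sub (h : EndsAt o ζ η) (hζ : GeodesicOn ζ (Ici 0)) (x : X) :
    Tendsto (fun u => dist x (ζ u) - u) atTop (𝓝 (η x - η (ζ 0))) := by
  refine ((h.tendsto_dist_sub_dist x).sub (h.tendsto_dist_sub_dist (ζ 0))).congr' ?_
  filter_upwards [eventually_ge_atTop 0] with u hu
  rw [dist_comm x, hζ.dist_eq_sub self_mem_Ici hu hu]
  ring

lemma apply_eq (h : EndsAt o ζ η) (hζ : GeodesicOn ζ (Ici 0)) {u : ℝ} (hu : 0 ≤ u) :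
    η (ζ u) = η (ζ 0) - u := by
  have hconst : Tendsto (fun v => dist (ζ u) (ζ v) - v) atTop (𝓝 (-u)) := by
    refine tendsto_const_nhds.congr' ?_
    filter_upwards [eventually_ge_atTop u] with v hv
    rw [dist_comm, hζ.dist_eq_sub hu (hu.trans hv) hv]
    ring
  linarith [tendsto_nhds_unique (h.tendsto_dist_sub hζ (ζ u)) hconst]

lemma comp_const_add (h : EndsAt o ζ η) (a : ℝ) : EndsAt o (fun v => ζ (a + v)) η :=
  h.comp (tendsto_atTop_add_const_left atTop a tendsto_id)

end EndsAt

lemma le_max_of_midpoint_convex {f : ℝ → ℝ} {a b : ℝ} (hab : a ≤ b)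
    (hf : ContinuousOn f (Icc a b))
    (hmid : ∀ u ∈ Icc a b, ∀ v ∈ Icc a b, f ((u + v) / 2) ≤ (f u + f v) / 2) :
    ∀ u ∈ Icc a b, f u ≤ max (f a) (f b) := by
  obtain ⟨w, hw, hmax⟩ := isCompact_Icc.exists_isMaxOn (nonempty_Icc.2 hab) hf
  intro u hu
  refine (hmax hu).trans ?_
  -- `w` is the midpoint of the nearer endpoint and its reflection in `w`
  rcases le_total (w - a) (b - w) with h | h
  · have hw' : 2 * w - a ∈ Icc a b := ⟨by linarith [hw.1], by linarith⟩
    have := hmid a (left_mem_Icc.2 hab) _ hw'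
    rw [show (a + (2 * w - a)) / 2 = w by ring] at this
    have hmax' : f (2 * w - a) ≤ f w := hmax hw'
    linarith [le_max_left (f a) (f b)]
  · have hw' : 2 * w - b ∈ Icc a b := ⟨by linarith, by linarith [hw.2]⟩
    have := hmid _ hw' b (right_mem_Icc.2 hab)
    rw [show (2 * w - b + b) / 2 = w by ring] at this
    have hmax' : f (2 * w - b) ≤ f w := hmax hw'
    linarith [le_max_right (f a) (f b)]

section CAT0

variable [CAT0Space X] {ζ : ℝ → X}

lemma sq_dist_midpoint_sub_sq_le (x : X) {J : Set ℝ} (hζ : GeodesicOn ζ J) (c : ℝ) {u v : ℝ}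
    (hu : u ∈ J) (hv : v ∈ J) (hm : (u + v) / 2 ∈ J) :
    dist x (ζ ((u + v) / 2)) ^ 2 - ((u + v) / 2 - c) ^ 2 ≤
      ((dist x (ζ u) ^ 2 - (u - c) ^ 2) + (dist x (ζ v) ^ 2 - (v - c) ^ 2)) / 2 := by
  have hcn := CAT0Space.cn_ineq x (ζ u) (ζ v) (ζ ((u + v) / 2))
    (by rw [hζ u hu _ hm, hζ u hu v hv, show u - (u + v) / 2 = (u - v) / 2 by ring, abs_div,
      abs_two])
    (by rw [hζ v hv _ hm, hζ u hu v hv, show v - (u + v) / 2 = -((u - v) / 2) by ring, abs_neg,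
      abs_div, abs_two])
  rw [hζ u hu v hv, sq_abs] at hcn
  linear_combination hcn

lemma sq_dist_le_of_le (x : X) (hζ : GeodesicOn ζ (Ici 0)) {u U : ℝ} (hu : 0 ≤ u)
    (huU : u ≤ U) :
    dist x (ζ u) ^ 2 ≤ u ^ 2 + 2 * u * (dist x (ζ U) - U) + dist x (ζ 0) ^ 2 := by
  -- this `c` makes `f U = 0 ≤ f 0`, so midpoint convexity bounds `f u` by `f 0`
  set c := U - dist x (ζ U)
  set f : ℝ → ℝ := fun v => dist x (ζ v) ^ 2 - (v - c) ^ 2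
  have hIcc : Icc 0 U ⊆ Ici 0 := Icc_subset_Ici_self
  have hf : ContinuousOn f (Icc 0 U) :=
    (((hζ.continuousOn_dist x).mono hIcc).pow 2).sub
      ((continuousOn_id.sub continuousOn_const).pow 2)
  have hmid : ∀ v ∈ Icc 0 U, ∀ w ∈ Icc 0 U, f ((v + w) / 2) ≤ (f v + f w) / 2 :=
    fun v hv w hw => sq_dist_midpoint_sub_sq_le x hζ c (hIcc hv) (hIcc hw)
      (div_nonneg (add_nonneg hv.1 hw.1) zero_le_two)
  have hfu := le_max_of_midpoint_convex (hu.trans huU) hf hmid u ⟨hu, huU⟩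
  have hfU : f U = 0 := by simp only [f, c, sub_sub_cancel, sub_self]
  have hc : |c| ≤ dist x (ζ 0) := by
    have hU : dist (ζ U) (ζ 0) = U := by
      rw [hζ.dist_eq_sub self_mem_Ici (hu.trans huU) (hu.trans huU), sub_zero]
    have := abs_dist_sub_le (ζ 0) x (ζ U)
    rwa [dist_comm (ζ 0) (ζ U), hU, dist_comm (ζ 0) x] at this
  have hf0 : 0 ≤ f 0 := by
    simp only [f, zero_sub, neg_sq]
    nlinarith [sq_abs c, abs_nonneg c]
  rw [hfU, max_eq_left hf0] at hfu
  simp only [f] at hfu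
  linear_combination hfu

lemma sq_dist_le_of_tendsto (x : X) (hζ : GeodesicOn ζ (Ici 0)) {L : ℝ}
    (hL : Tendsto (fun u => dist x (ζ u) - u) atTop (𝓝 L)) {u : ℝ} (hu : 0 ≤ u) :
    dist x (ζ u) ^ 2 ≤ u ^ 2 + 2 * u * L + dist x (ζ 0) ^ 2 :=
  ge_of_tendsto (((hL.const_mul (2 * u)).const_add (u ^ 2)).add_const _) <| by
    filter_upwards [eventually_ge_atTop u] with U hU
    exact sq_dist_le_of_le x hζ hu hU

end CAT0

section AsymptoticRays

variable {o : X} {ζ₁ ζ₂ : ℝ → X} {η : C(X, ℝ)}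

lemma abs_sub_sub_le_dist_of_endsAt (h₁ : GeodesicOn ζ₁ (Ici 0)) (h₂ : GeodesicOn ζ₂ (Ici 0))
    (he₁ : EndsAt o ζ₁ η) (he₂ : EndsAt o ζ₂ η) {r u : ℝ} (hr : 0 ≤ r) (hu : 0 ≤ u) :
    |u - r - (η (ζ₂ 0) - η (ζ₁ 0))| ≤ dist (ζ₁ r) (ζ₂ u) := by
  have hη₁ := he₁.apply_eq h₁ hr
  have hη₂ := he₂.apply_eq h₂ hu
  rw [abs_le]
  constructor
  · linarith [he₁.sub_le_dist (ζ₂ u) (ζ₁ r), dist_comm (ζ₁ r) (ζ₂ u)]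
  · linarith [he₁.sub_le_dist (ζ₁ r) (ζ₂ u)]

lemma abs_projParam_sub_le (h₁ : GeodesicOn ζ₁ (Ici 0)) (h₂ : GeodesicOn ζ₂ (Ici 0))
    (he₁ : EndsAt o ζ₁ η) (he₂ : EndsAt o ζ₂ η) {r : ℝ} (hr : 0 ≤ r) :
    |projParam ζ₂ (Ici 0) (ζ₁ r) - r - (η (ζ₂ 0) - η (ζ₁ 0))| ≤
      infDist (ζ₁ r) (ζ₂ '' Ici 0) := by
  obtain ⟨hp, hpd⟩ := h₂.projParam_spec isClosed_Ici nonempty_Ici bddBelow_Ici (ζ₁ r)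
  exact hpd ▸ abs_sub_sub_le_dist_of_endsAt h₁ h₂ he₁ he₂ hr hp

variable [CAT0Space X]

lemma sq_dist_le_of_endsAt (h₁ : GeodesicOn ζ₁ (Ici 0)) (h₂ : GeodesicOn ζ₂ (Ici 0))
    (he₁ : EndsAt o ζ₁ η) (he₂ : EndsAt o ζ₂ η) {r u : ℝ} (hr : 0 ≤ r) (hu : 0 ≤ u) :
    dist (ζ₁ r) (ζ₂ u) ^ 2 ≤ (u - r - (η (ζ₂ 0) - η (ζ₁ 0))) ^ 2 + dist (ζ₁ 0) (ζ₂ 0) ^ 2 -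
      (η (ζ₂ 0) - η (ζ₁ 0)) ^ 2 := by
  have hr' := sq_dist_le_of_tendsto (ζ₂ 0) h₁ (he₁.tendsto_dist_sub h₁ (ζ₂ 0)) hr
  have hu' := sq_dist_le_of_tendsto (ζ₁ r) h₂ (he₂.tendsto_dist_sub h₂ (ζ₁ r)) hu
  rw [he₁.apply_eq h₁ hr] at hu'
  rw [dist_comm (ζ₂ 0) (ζ₁ r), dist_comm (ζ₂ 0) (ζ₁ 0)] at hr'
  linear_combination hr' + hu'

lemma infDist_le_dist_of_endsAt (h₁ : GeodesicOn ζ₁ (Ici 0)) (h₂ : GeodesicOn ζ₂ (Ici 0))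
    (he₁ : EndsAt o ζ₁ η) (he₂ : EndsAt o ζ₂ η) {a b r : ℝ} (ha : 0 ≤ a) (hb : 0 ≤ b)
    (har : a ≤ r) : infDist (ζ₁ r) (ζ₂ '' Ici 0) ≤ dist (ζ₁ a) (ζ₂ b) := by
  set K := η (ζ₂ b) - η (ζ₁ a)
  obtain ⟨w, hw₀, hw⟩ : ∃ w, 0 ≤ w ∧ (w - (r - a) - K) ^ 2 ≤ K ^ 2 := by
    rcases le_total 0 (r - a + K) with h | h
    · exact ⟨r - a + K, h, by nlinarith⟩
    · exact ⟨0, le_rfl, by nlinarith⟩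
  have hbound := sq_dist_le_of_endsAt (h₁.comp_const_add ha) (h₂.comp_const_add hb)
    (he₁.comp_const_add a) (he₂.comp_const_add b) (sub_nonneg.2 har) hw₀
  simp only [add_zero, add_sub_cancel] at hbound
  calc infDist (ζ₁ r) (ζ₂ '' Ici 0) ≤ dist (ζ₁ r) (ζ₂ (b + w)) :=
        infDist_le_dist_of_mem (mem_image_of_mem ζ₂ (add_nonneg hb hw₀))
    _ ≤ dist (ζ₁ a) (ζ₂ b) := (sq_le_sq₀ dist_nonneg dist_nonneg).1 (by linarith)

lemma nearSet_eq_Ici (h₁ : GeodesicOn ζ₁ (Ici 0)) (h₂ : GeodesicOn ζ₂ (Ici 0))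
    (he₁ : EndsAt o ζ₁ η) (he₂ : EndsAt o ζ₂ η) {B : ℝ}
    (hne : (nearSet B ζ₁ (Ici 0) ζ₂ (Ici 0)).Nonempty) :
    nearSet B ζ₁ (Ici 0) ζ₂ (Ici 0) = Ici (sInf (nearSet B ζ₁ (Ici 0) ζ₂ (Ici 0))) := by
  set N := nearSet B ζ₁ (Ici 0) ζ₂ (Ici 0)
  have hbdd : BddBelow N := ⟨0, fun _ h => h.1⟩
  have ha : sInf N ∈ N := (isClosed_nearSet h₁ isClosed_Ici).csInf_mem hne hbdd
  refine Subset.antisymm (fun r hr => csInf_le hbdd hr) fun r hr => ⟨Ici_subset_Ici.2 ha.1 hr, ?_⟩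
  obtain ⟨hb, hd⟩ := h₂.projParam_spec isClosed_Ici nonempty_Ici bddBelow_Ici (ζ₁ (sInf N))
  calc infDist (ζ₁ r) (ζ₂ '' Ici 0)
      ≤ dist (ζ₁ (sInf N)) (ζ₂ (projParam ζ₂ (Ici 0) (ζ₁ (sInf N)))) :=
        infDist_le_dist_of_endsAt h₁ h₂ he₁ he₂ ha.1 hb hr
    _ = infDist (ζ₁ (sInf N)) (ζ₂ '' Ici 0) := hd
    _ ≤ 6 * B + 2 := ha.2

lemma tauB_apply_eq_min (h₁ : GeodesicOn ζ₁ (Ici 0)) (h₂ : GeodesicOn ζ₂ (Ici 0))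
    (he₁ : EndsAt o ζ₁ η) (he₂ : EndsAt o ζ₂ η) {B r : ℝ}
    (hne₁ : (nearSet B ζ₁ (Ici 0) ζ₂ (Ici 0)).Nonempty)
    (hne₂ : (nearSet B ζ₂ (Ici 0) ζ₁ (Ici 0)).Nonempty)
    (hr : sInf (nearSet B ζ₁ (Ici 0) ζ₂ (Ici 0)) ≤ r) :
    tauB B (ζ₁ r) ζ₁ (Ici 0) ζ₂ (Ici 0) =
      min (r - sInf (nearSet B ζ₁ (Ici 0) ζ₂ (Ici 0)))
        (projParam ζ₂ (Ici 0) (ζ₁ r) - sInf (nearSet B ζ₂ (Ici 0) ζ₁ (Ici 0))) := by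
  have hN₁ := nearSet_eq_Ici h₁ h₂ he₁ he₂ hne₁
  have hN₂ := nearSet_eq_Ici h₂ h₁ he₂ he₁ hne₂
  have hrN : r ∈ nearSet B ζ₁ (Ici 0) ζ₂ (Ici 0) := hN₁.ge hr
  obtain ⟨hp, hpd⟩ := h₂.projParam_spec isClosed_Ici nonempty_Ici bddBelow_Ici (ζ₁ r)
  have hpN : projParam ζ₂ (Ici 0) (ζ₁ r) ∈ nearSet B ζ₂ (Ici 0) ζ₁ (Ici 0) := by
    refine ⟨hp, (infDist_le_dist_of_mem (mem_image_of_mem ζ₁ hrN.1)).trans ?_⟩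
    rw [dist_comm, hpd]
    exact hrN.2
  have hbdd : ∀ {ζ ζ' : ℝ → X}, BddBelow (nearSet B ζ (Ici 0) ζ' (Ici 0)) :=
    ⟨0, fun _ h => h.1⟩
  have hp₂ := csInf_le hbdd hpN
  rw [tauB_eq_min_of_not_bddAbove hne₁ hne₂ hbdd hbdd (hN₁ ▸ not_bddAbove_Ici _)
      (hN₂ ▸ not_bddAbove_Ici _) (by rwa [h₁.projParam_apply hrN.1]) hp₂,
    h₁.projParam_apply hrN.1, h₁.dist_eq_sub (le_csInf hne₁ fun _ h => h.1) hrN.1 hr,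
    h₂.dist_eq_sub (le_csInf hne₂ fun _ h => h.1) hp hp₂]

end AsymptoticRays

theorem tauB_grows_along_ray_general
    {X : Type} [MetricSpace X] [CAT0Space X] (o : X)
    (B : ℝ) (ζ₁ ζ₂ : ℝ → X)
    (h1 : GeodesicOn ζ₁ (Set.Ici 0)) (h2 : GeodesicOn ζ₂ (Set.Ici 0))
    (η : C(X, ℝ)) (he1 : EndsAt o ζ₁ η) (he2 : EndsAt o ζ₂ η)
    (s : ℝ) (hs : 1 ≤ s)
    (hp : 1 ≤ tauB B (ζ₁ s) ζ₁ (Set.Ici 0) ζ₂ (Set.Ici 0)) :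
    ∀ t : ℝ, 0 ≤ t →
      tauB B (ζ₁ s) ζ₁ (Set.Ici 0) ζ₂ (Set.Ici 0) + t - 12 * B - 4 ≤
        tauB B (ζ₁ (s + t)) ζ₁ (Set.Ici 0) ζ₂ (Set.Ici 0) := by
  intro t ht
  have hs₀ : 0 ≤ s := zero_le_one.trans hs
  obtain ⟨hne₁, hne₂, has, -⟩ := sInf_nearSet_le_projParam_of_tauB_ne_zero
    (by linarith : tauB B (ζ₁ s) ζ₁ (Ici 0) ζ₂ (Ici 0) ≠ 0) ⟨0, fun _ h => h.1⟩ ⟨0, fun _ h => h.1⟩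
  rw [h1.projParam_apply hs₀] at has
  have hnear : ∀ r, sInf (nearSet B ζ₁ (Ici 0) ζ₂ (Ici 0)) ≤ r →
      infDist (ζ₁ r) (ζ₂ '' Ici 0) ≤ 6 * B + 2 :=
    fun r hr => ((nearSet_eq_Ici h1 h2 he1 he2 hne₁).ge hr).2
  have hB : 0 ≤ 6 * B + 2 := infDist_nonneg.trans (hnear s has)
  have hps := (abs_le.1 (abs_projParam_sub_le h1 h2 he1 he2 hs₀)).2.trans (hnear s has)
  have hpst := (abs_le.1 (abs_projParam_sub_le h1 h2 he1 he2 (by linarith : 0 ≤ s + t))).1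
  have hpst' := hnear (s + t) (by linarith)
  rw [tauB_apply_eq_min h1 h2 he1 he2 hne₁ hne₂ has,
    tauB_apply_eq_min h1 h2 he1 he2 hne₁ hne₂ (by linarith)]
  set a₁ := sInf (nearSet B ζ₁ (Ici 0) ζ₂ (Ici 0))
  set a₂ := sInf (nearSet B ζ₂ (Ici 0) ζ₁ (Ici 0))
  set p := projParam ζ₂ (Ici 0) (ζ₁ s)
  exact le_min (by linarith [min_le_left (s - a₁) (p - a₂)])
    (by linarith [min_le_right (s - a₁) (p - a₂)])

/-- Lemma `decay`. Let `ζ₁, ζ₂ : [0,∞) → X` be geodesic rays in a proper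
CAT(0)-space with the same endpoint at infinity, and let `s ≥ 1` be such that
`p = τ_B(ζ₁(s), ζ₁, ζ₂) ≥ 1`. Then `τ_B(ζ₁(s+t), ζ₁, ζ₂) ≥ p + t − 12B − 4` for all
`t ≥ 0`. -/
theorem tauB_grows_along_ray
    {X : Type} [MetricSpace X] [ProperSpace X] [CAT0Space X] (o : X)
    (B : ℝ) (hB : 0 < B) (ζ₁ ζ₂ : ℝ → X)
    (h1 : GeodesicOn ζ₁ (Set.Ici 0)) (h2 : GeodesicOn ζ₂ (Set.Ici 0))
    (η : C(X, ℝ)) (he1 : EndsAt o ζ₁ η) (he2 : EndsAt o ζ₂ η)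
    (s : ℝ) (hs : 1 ≤ s)
    (hp : 1 ≤ tauB B (ζ₁ s) ζ₁ (Set.Ici 0) ζ₂ (Set.Ici 0)) :
    ∀ t : ℝ, 0 ≤ t →
      tauB B (ζ₁ s) ζ₁ (Set.Ici 0) ζ₂ (Set.Ici 0) + t - 12 * B - 4 ≤
        tauB B (ζ₁ (s + t)) ζ₁ (Set.Ici 0) ζ₂ (Set.Ici 0) :=
  tauB_grows_along_ray_general o B ζ₁ ζ₂ h1 h2 η he1 he2 s hs hp

end
end

section
/- For B > 0, the space 𝒜(B) × X admits a natural Iso(X)-invariant, ι-invariant distance function d̃ inducing the product topology, and there is a number c > 0 such that for every x ∈ X the restriction of d̃ to 𝒜(B) × {x} satisfies c δ_x(α, β) ≤ d̃((α, x), (β, x)) ≤ δ_x(α, β) for all α, β ∈ 𝒜(B). -/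
open Metric Set Filter Topology
open scoped ENNReal Classical Pointwise

noncomputable section

universe u

variable {X : Type u} [MetricSpace X]

/-!
Embed `𝒜(B) × X` into `X × ℓ^∞(𝒜(B) × X)` by
`(α, x) ↦ (x, Φ(α, x))`, `Φ(α, x)(θ, z) = e^{-χ d(x, z)} δ_z(α, θ)`, and let `d̃` be the
pulled-back max-metric. Since `δ_z ≤ e^{χ d(x, z)} δ_x`, one gets
`δ_x(α, β) ≤ ‖Φ(α, x) - Φ(β, y)‖ ≤ δ_x(α, β) + χ d(x, y)` (the lower bound by evaluating at
`(β, x)`). This gives the product topology and `d̃ = δ_x` on each fibre, so `c = 1`.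
Invariance of `{δ_x}` under `Iso(X)` and `ι` makes `Φ` equivariant, and the supremum defining
the `ℓ^∞`-norm is unchanged under reindexing by a bijection.
-/

section BallTopology

variable {α : Type*}

def IsOpenByBalls (d : α → α → ℝ) (s : Set α) : Prop :=
  ∀ a ∈ s, ∃ ε > 0, ∀ b, d a b < ε → b ∈ s

lemma isOpenByBalls_setOf_lt {d : α → α → ℝ} (htri : ∀ a b c, d a c ≤ d a b + d b c)
    (a : α) (r : ℝ) : IsOpenByBalls d {b | d a b < r} := by
  intro b hb
  refine ⟨r - d a b, sub_pos.2 hb, fun c hc => ?_⟩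
  have := htri a b c
  show d a c < r
  linarith

variable {A Y : Type*} [TopologicalSpace A] [PseudoMetricSpace Y]

lemma isOpen_prod_iff_isOpenByBalls {δ : Y → A → A → ℝ}
    (hδ : ∀ x s, IsOpen s ↔ IsOpenByBalls (δ x) s) (hself : ∀ x a, δ x a a = 0)
    (htri : ∀ x a b c, δ x a c ≤ δ x a b + δ x b c)
    {d : A × Y → A × Y → ℝ} {C : ℝ} (hC : 0 ≤ C)
    (hdist_le : ∀ a b x y, dist x y ≤ d (a, x) (b, y))
    (hδ_le : ∀ a b x y, δ x a b ≤ d (a, x) (b, y))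
    (hle : ∀ a b x y, d (a, x) (b, y) ≤ δ x a b + C * dist x y)
    (s : Set (A × Y)) : IsOpen s ↔ IsOpenByBalls d s := by
  constructor
  · rintro hs ⟨a, x⟩ hax
    obtain ⟨U, V, hU, hV, haU, hxV, hUV⟩ := isOpen_prod_iff.1 hs a x hax
    obtain ⟨ε₁, hε₁, hU'⟩ := (hδ x U).1 hU a haU
    obtain ⟨ε₂, hε₂, hV'⟩ := Metric.isOpen_iff.1 hV x hxV
    refine ⟨min ε₁ ε₂, lt_min hε₁ hε₂, fun ⟨b, y⟩ hd => hUV ⟨hU' b ?_, hV' ?_⟩⟩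
    · exact (hδ_le a b x y).trans_lt (hd.trans_le (min_le_left _ _))
    · rw [mem_ball, dist_comm]
      exact (hdist_le a b x y).trans_lt (hd.trans_le (min_le_right _ _))
  · refine fun hs => isOpen_prod_iff.2 fun a x hax => ?_
    obtain ⟨ε, hε, hball⟩ := hs (a, x) hax
    have hr : 0 < ε / (1 + C) := div_pos hε (by linarith)
    refine ⟨{b | δ x a b < ε / (1 + C)}, ball x (ε / (1 + C)),
      (hδ x _).2 (isOpenByBalls_setOf_lt (htri x) a _), isOpen_ball,
      by simpa [hself] using hr, mem_ball_self hr, fun ⟨b, y⟩ ⟨hb, hy⟩ => hball _ ?_⟩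
    rw [mem_ball, dist_comm] at hy
    calc d (a, x) (b, y) ≤ δ x a b + C * dist x y := hle a b x y
      _ < ε / (1 + C) + C * (ε / (1 + C)) := add_lt_add_of_lt_of_le hb (by gcongr)
      _ = ε := by field_simp

end BallTopology

lemma Real.abs_exp_neg_sub_exp_neg_le {a b : ℝ} (ha : 0 ≤ a) (hb : 0 ≤ b) :
    |Real.exp (-a) - Real.exp (-b)| ≤ |a - b| := by
  wlog hba : b ≤ a generalizing a b
  · rw [abs_sub_comm, abs_sub_comm a]
    exact this hb ha (le_of_not_ge hba)
  have hexp : Real.exp (-a) = Real.exp (-b) * Real.exp (-(a - b)) := by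
    rw [← Real.exp_add]; ring_nf
  have h₁ : Real.exp (-b) ≤ 1 := Real.exp_le_one_iff.2 (by linarith)
  have h₂ : Real.exp (-(a - b)) ≤ 1 := Real.exp_le_one_iff.2 (by linarith)
  have h₃ := Real.one_sub_le_exp_neg (a - b)
  rw [abs_of_nonpos (by nlinarith [Real.exp_pos (-b)]), abs_of_nonneg (by linarith)]
  nlinarith [Real.exp_pos (-b)]

lemma lp.norm_eq_of_surjective {ι κ E : Type*} [NormedAddCommGroup E]
    {f : lp (fun _ : ι => E) ∞} {g : lp (fun _ : κ => E) ∞} {T : κ → ι} (hT : Function.Surjective T) (h : ∀ i, f (T i) = g i) : ‖f‖ = ‖g‖ := by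
  rw [lp.norm_eq_ciSup, lp.norm_eq_ciSup, ← hT.iSup_comp]
  simp only [h]

section MetricFamily

variable {A Y : Type*} [MetricSpace Y]

structure IsBoundedMetricFamily (χ : ℝ) (δ : Y → A → A → ℝ) : Prop where
  nonneg : ∀ x a b, 0 ≤ δ x a b
  eq_zero_iff : ∀ x a b, δ x a b = 0 ↔ a = b
  symm : ∀ x a b, δ x a b = δ x b a
  triangle : ∀ x a b c, δ x a c ≤ δ x a b + δ x b c
  le_one : ∀ x a b, δ x a b ≤ 1
  le_exp_mul_dist : ∀ x y a b, δ y a b ≤ Real.exp (χ * dist x y) * δ x a b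

namespace IsBoundedMetricFamily

variable {χ : ℝ} {δ : Y → A → A → ℝ}

lemma self_eq_zero (hδ : IsBoundedMetricFamily χ δ) (x : Y) (a : A) : δ x a a = 0 :=
  (hδ.eq_zero_iff x a a).2 rfl

lemma abs_dist_sub_le (hδ : IsBoundedMetricFamily χ δ) (x : Y) (a b c : A) :
    |δ x a c - δ x b c| ≤ δ x a b := by
  have h₁ := hδ.triangle x a b c
  have h₂ := hδ.triangle x b a c
  rw [hδ.symm x b a] at h₂
  rw [abs_sub_le_iff]
  constructor <;> linarith

lemma exp_neg_mul_dist_mul_le (hδ : IsBoundedMetricFamily χ δ) (x z : Y) (a b : A) :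
    Real.exp (-(χ * dist x z)) * δ z a b ≤ δ x a b :=
  calc Real.exp (-(χ * dist x z)) * δ z a b
      ≤ Real.exp (-(χ * dist x z)) * (Real.exp (χ * dist x z) * δ x a b) := by
        gcongr; exact hδ.le_exp_mul_dist x z a b
    _ = δ x a b := by rw [← mul_assoc, ← Real.exp_add, neg_add_cancel, Real.exp_zero, one_mul]

def weightedEmbedding (hδ : IsBoundedMetricFamily χ δ) (u : A × Y) :
    lp (fun _ : A × Y => ℝ) ∞ :=
  ⟨fun i => Real.exp (-(χ * dist u.2 i.2)) * δ i.2 u.1 i.1, memℓp_infty ⟨1, by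
    rintro _ ⟨i, rfl⟩
    dsimp only
    rw [Real.norm_of_nonneg (mul_nonneg (Real.exp_pos _).le (hδ.nonneg _ _ _))]
    exact (hδ.exp_neg_mul_dist_mul_le _ _ _ _).trans (hδ.le_one _ _ _)⟩⟩

@[simp]
lemma weightedEmbedding_apply (hδ : IsBoundedMetricFamily χ δ) (u i : A × Y) :
    hδ.weightedEmbedding u i = Real.exp (-(χ * dist u.2 i.2)) * δ i.2 u.1 i.1 :=
  rfl

lemma abs_weightedEmbedding_sub_le_of_snd_eq (hδ : IsBoundedMetricFamily χ δ) (x : Y) (a b : A)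
    (i : A × Y) : |hδ.weightedEmbedding (a, x) i - hδ.weightedEmbedding (b, x) i| ≤ δ x a b := by
  simp only [weightedEmbedding_apply, ← mul_sub, abs_mul, Real.abs_exp]
  exact (mul_le_mul_of_nonneg_left (hδ.abs_dist_sub_le _ a b _) (Real.exp_pos _).le).trans
    (hδ.exp_neg_mul_dist_mul_le _ _ _ _)

lemma abs_weightedEmbedding_sub_le_of_fst_eq (hδ : IsBoundedMetricFamily χ δ) (hχ : 0 ≤ χ)
    (x y : Y) (b : A) (i : A × Y) :
    |hδ.weightedEmbedding (b, x) i - hδ.weightedEmbedding (b, y) i| ≤ χ * dist x y := by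
  simp only [weightedEmbedding_apply, ← sub_mul, abs_mul, abs_of_nonneg (hδ.nonneg _ _ _)]
  calc |Real.exp (-(χ * dist x i.2)) - Real.exp (-(χ * dist y i.2))| * δ i.2 b i.1
      ≤ |χ * dist x i.2 - χ * dist y i.2| * 1 := by
        exact mul_le_mul (Real.abs_exp_neg_sub_exp_neg_le (by positivity) (by positivity))
          (hδ.le_one _ _ _) (hδ.nonneg _ _ _) (abs_nonneg _)
    _ ≤ χ * dist x y := by
        rw [mul_one, ← mul_sub, abs_mul, abs_of_nonneg hχ]
        exact mul_le_mul_of_nonneg_left (_root_.abs_dist_sub_le x y i.2) hχ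

lemma le_dist_weightedEmbedding (hδ : IsBoundedMetricFamily χ δ) (x y : Y) (a b : A) :
    δ x a b ≤ dist (hδ.weightedEmbedding (a, x)) (hδ.weightedEmbedding (b, y)) := by
  rw [dist_eq_norm]
  have h := lp.norm_apply_le_norm ENNReal.top_ne_zero
    (hδ.weightedEmbedding (a, x) - hδ.weightedEmbedding (b, y)) (b, x)
  simpa [hδ.self_eq_zero, abs_of_nonneg (hδ.nonneg x a b)] using h

lemma dist_weightedEmbedding_le (hδ : IsBoundedMetricFamily χ δ) (hχ : 0 ≤ χ) (x y : Y)
    (a b : A) :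
    dist (hδ.weightedEmbedding (a, x)) (hδ.weightedEmbedding (b, y)) ≤ δ x a b + χ * dist x y := by
  rw [dist_eq_norm]
  refine lp.norm_le_of_forall_le (by positivity [hδ.nonneg x a b]) fun i => ?_
  rw [lp.coeFn_sub, Pi.sub_apply, Real.norm_eq_abs]
  exact (abs_sub_le _ (hδ.weightedEmbedding (b, x) i) _).trans
    (add_le_add (hδ.abs_weightedEmbedding_sub_le_of_snd_eq x a b i)
      (hδ.abs_weightedEmbedding_sub_le_of_fst_eq hχ x y b i))

lemma dist_weightedEmbedding_of_snd_eq (hδ : IsBoundedMetricFamily χ δ) (x : Y) (a b : A) :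
    dist (hδ.weightedEmbedding (a, x)) (hδ.weightedEmbedding (b, x)) = δ x a b := by
  refine le_antisymm ?_ (hδ.le_dist_weightedEmbedding x x a b)
  rw [dist_eq_norm]
  refine lp.norm_le_of_forall_le (hδ.nonneg x a b) fun i => ?_
  rw [lp.coeFn_sub, Pi.sub_apply, Real.norm_eq_abs]
  exact hδ.abs_weightedEmbedding_sub_le_of_snd_eq x a b i

lemma dist_weightedEmbedding_map (hδ : IsBoundedMetricFamily χ δ) {σ : A → A}
    (hσ : Function.Surjective σ) (g : Y ≃ᵢ Y) (hinv : ∀ z a b, δ (g z) (σ a) (σ b) = δ z a b)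
    (u v : A × Y) :
    dist (hδ.weightedEmbedding (Prod.map σ g u)) (hδ.weightedEmbedding (Prod.map σ g v)) =
      dist (hδ.weightedEmbedding u) (hδ.weightedEmbedding v) := by
  rw [dist_eq_norm, dist_eq_norm]
  refine lp.norm_eq_of_surjective (hσ.prodMap g.surjective) fun i => ?_
  simp [hinv, g.dist_eq]

def productEmbedding (hδ : IsBoundedMetricFamily χ δ) (u : A × Y) :
    Y × lp (fun _ : A × Y => ℝ) ∞ :=
  (u.2, hδ.weightedEmbedding u)

lemma injective_productEmbedding (hδ : IsBoundedMetricFamily χ δ) :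
    Function.Injective hδ.productEmbedding := by
  rintro ⟨a, x⟩ ⟨b, y⟩ h
  obtain rfl : x = y := congrArg Prod.fst h
  have hab : δ x a b = 0 := by
    rw [← hδ.dist_weightedEmbedding_of_snd_eq]
    exact dist_eq_zero.2 (congrArg Prod.snd h)
  rw [(hδ.eq_zero_iff x a b).1 hab]

lemma dist_productEmbedding (hδ : IsBoundedMetricFamily χ δ) (u v : A × Y) :
    dist (hδ.productEmbedding u) (hδ.productEmbedding v) =
      max (dist u.2 v.2) (dist (hδ.weightedEmbedding u) (hδ.weightedEmbedding v)) :=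
  Prod.dist_eq

lemma dist_productEmbedding_of_snd_eq (hδ : IsBoundedMetricFamily χ δ) (x : Y) (a b : A) :
    dist (hδ.productEmbedding (a, x)) (hδ.productEmbedding (b, x)) = δ x a b := by
  rw [dist_productEmbedding, dist_weightedEmbedding_of_snd_eq, dist_self,
    max_eq_right (hδ.nonneg x a b)]

lemma dist_productEmbedding_le (hδ : IsBoundedMetricFamily χ δ) (hχ : 0 ≤ χ) (x y : Y)
    (a b : A) :
    dist (hδ.productEmbedding (a, x)) (hδ.productEmbedding (b, y)) ≤
      δ x a b + (1 + χ) * dist x y := by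
  rw [dist_productEmbedding]
  have := hδ.dist_weightedEmbedding_le hχ x y a b
  refine max_le ?_ (by nlinarith [dist_nonneg (x := x) (y := y)])
  nlinarith [dist_nonneg (x := x) (y := y), hδ.nonneg x a b]

lemma dist_productEmbedding_map (hδ : IsBoundedMetricFamily χ δ) {σ : A → A}
    (hσ : Function.Surjective σ) (g : Y ≃ᵢ Y) (hinv : ∀ z a b, δ (g z) (σ a) (σ b) = δ z a b)
    (u v : A × Y) :
    dist (hδ.productEmbedding (Prod.map σ g u)) (hδ.productEmbedding (Prod.map σ g v)) =
      dist (hδ.productEmbedding u) (hδ.productEmbedding v) := by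
  rw [dist_productEmbedding, dist_productEmbedding, hδ.dist_weightedEmbedding_map hσ g hinv]
  simp [g.dist_eq]

lemma isOpen_iff_isOpenByBalls_productEmbedding [TopologicalSpace A]
    (hδ : IsBoundedMetricFamily χ δ) (hχ : 0 ≤ χ) (htop : ∀ x s, IsOpen s ↔ IsOpenByBalls (δ x) s)
    (s : Set (A × Y)) :
    IsOpen s ↔ IsOpenByBalls (fun u v => dist (hδ.productEmbedding u) (hδ.productEmbedding v)) s :=
  isOpen_prod_iff_isOpenByBalls htop hδ.self_eq_zero hδ.triangle (by linarith)
    (fun a b x y => (le_max_left _ _).trans (hδ.dist_productEmbedding (a, x) (b, y)).ge)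
    (fun a b x y => (hδ.le_dist_weightedEmbedding x y a b).trans
      ((le_max_right _ _).trans (hδ.dist_productEmbedding (a, x) (b, y)).ge))
    (fun a b x y => hδ.dist_productEmbedding_le hχ x y a b) s

end IsBoundedMetricFamily

end MetricFamily

section IsometryAction

variable {o : X} {B : ℝ}

lemma apply_eq_zero_of_tendsto_bcomp {γ : ℝ → X} {ξ : C(X, ℝ)} {l : Filter ℝ} [l.NeBot]
    (h : Tendsto (fun t => bcomp o (γ t)) l (𝓝 ξ)) : ξ o = 0 :=
  tendsto_nhds_unique (((continuous_eval_const o).tendsto ξ).comp h)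
    (by simp [Function.comp_def, bcomp])

lemma bcomp_isometryEquiv_apply (g : X ≃ᵢ X) (x : X) :
    bcomp o (g x) = boundaryAct o g (bcomp o x) := by
  ext z
  simp only [bcomp, boundaryAct, ContinuousMap.coe_mk, ← g.dist_eq x, g.apply_symm_apply]
  ring

lemma continuous_boundaryAct (g : X ≃ᵢ X) : Continuous (boundaryAct o g) := by
  have h : boundaryAct o g = fun ξ : C(X, ℝ) =>
      ξ.comp ⟨g.symm, g.symm.continuous⟩ - ContinuousMap.const X (ξ (g.symm o)) := by
    funext ξ; ext z; simp [boundaryAct]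
  rw [h]
  exact (ContinuousMap.continuous_precomp _).sub
    (ContinuousMap.continuous_const'.comp (continuous_eval_const _))

lemma boundaryAct_symm_boundaryAct (g : X ≃ᵢ X) {ξ : C(X, ℝ)} (hξ : ξ o = 0) :
    boundaryAct o g.symm (boundaryAct o g ξ) = ξ := by
  ext z
  simp [boundaryAct, hξ]

lemma Filter.Tendsto.bcomp_isometryEquiv {γ : ℝ → X} {ξ : C(X, ℝ)} {l : Filter ℝ}
    (g : X ≃ᵢ X) (h : Tendsto (fun t => bcomp o (γ t)) l (𝓝 ξ)) :
    Tendsto (fun t => bcomp o (g (γ t))) l (𝓝 (boundaryAct o g ξ)) := by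
  simpa only [bcomp_isometryEquiv_apply, Function.comp_def] using ((continuous_boundaryAct g).tendsto ξ).comp h

lemma projSet_image_isometryEquiv (g : X ≃ᵢ X) (A : Set X) (x : X) :
    projSet (g '' A) (g x) = g '' projSet A x := by
  ext p
  constructor
  · rintro ⟨⟨a, ha, rfl⟩, hd⟩
    exact ⟨a, ⟨ha, by rwa [g.dist_eq, infDist_image g.isometry] at hd⟩, rfl⟩
  · rintro ⟨a, ⟨ha, hd⟩, rfl⟩
    exact ⟨mem_image_of_mem g ha, by rwa [g.dist_eq, infDist_image g.isometry]⟩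

lemma ContractingOn.isometryEquiv_comp {γ : ℝ → X} {J : Set ℝ} (g : X ≃ᵢ X)
    (h : ContractingOn B γ J) : ContractingOn B (g ∘ γ) J := by
  refine ⟨fun s hs t ht => by simpa [g.dist_eq] using h.1 s hs t ht, fun z r hdisj => ?_⟩
  rw [image_comp] at hdisj ⊢
  have hdisj' : Disjoint (closedBall (g.symm z) r) (γ '' J) := by
    simpa [g.preimage_closedBall, preimage_image_eq _ g.injective] using hdisj.preimage g
  have hball : closedBall z r = g '' closedBall (g.symm z) r := by
    rw [g.image_closedBall, g.apply_symm_apply]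
  rw [hball, biUnion_image]
  simp only [projSet_image_isometryEquiv, ← image_iUnion₂]
  exact (g.ediam_image _).le.trans (h.2 _ _ hdisj')

lemma ContractingOn.comp_neg {γ : ℝ → X} (h : ContractingOn B γ univ) :
    ContractingOn B (fun t => γ (-t)) univ := by
  have himage : (fun t => γ (-t)) '' univ = γ '' univ := by
    simpa [image_univ, Function.comp_def] using (Equiv.neg ℝ).surjective.range_comp γ
  refine ⟨fun s _ t _ => ?_, fun z r => by simpa only [himage] using h.2 z r⟩
  rw [h.1 _ trivial _ trivial, ← abs_neg]
  ring_nf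

lemma pairAct_mem_ABSet (g : X ≃ᵢ X) {p : C(X, ℝ) × C(X, ℝ)} (hp : p ∈ ABSet o B) :
    pairAct o g p ∈ ABSet o B := by
  obtain ⟨hne, γ, hγ, hbeg, hend⟩ := hp
  refine ⟨fun h => hne ?_, g ∘ γ, hγ.isometryEquiv_comp g, hbeg.bcomp_isometryEquiv g,
    hend.bcomp_isometryEquiv g⟩
  exact (boundaryAct_symm_boundaryAct g (apply_eq_zero_of_tendsto_bcomp hbeg)).symm.trans
    ((congrArg (boundaryAct o g.symm) h).trans
      (boundaryAct_symm_boundaryAct g (apply_eq_zero_of_tendsto_bcomp hend)))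

lemma pairAct_symm_pairAct (g : X ≃ᵢ X) {p : C(X, ℝ) × C(X, ℝ)} (hp : p ∈ ABSet o B) :
    pairAct o g.symm (pairAct o g p) = p := by
  obtain ⟨-, _, -, hbeg, hend⟩ := hp
  exact Prod.ext (boundaryAct_symm_boundaryAct g (apply_eq_zero_of_tendsto_bcomp hbeg))
    (boundaryAct_symm_boundaryAct g (apply_eq_zero_of_tendsto_bcomp hend))

lemma swap_mem_ABSet {p : C(X, ℝ) × C(X, ℝ)} (hp : p ∈ ABSet o B) : (p.2, p.1) ∈ ABSet o B := by
  obtain ⟨hne, γ, hγ, hbeg, hend⟩ := hp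
  exact ⟨hne.symm, fun t => γ (-t), hγ.comp_neg, hend.comp tendsto_neg_atBot_atTop,
    hbeg.comp tendsto_neg_atTop_atBot⟩

variable (o B)

def ABSet.act (g : X ≃ᵢ X) : ABSet o B ≃ ABSet o B where
  toFun p := ⟨pairAct o g p, pairAct_mem_ABSet g p.2⟩
  invFun p := ⟨pairAct o g.symm p, pairAct_mem_ABSet g.symm p.2⟩
  left_inv p := Subtype.ext (pairAct_symm_pairAct g p.2)
  right_inv p := Subtype.ext (by simpa using pairAct_symm_pairAct g.symm p.2)

def ABSet.swap (p : ABSet o B) : ABSet o B :=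
  ⟨((p : C(X, ℝ) × C(X, ℝ)).2, (p : C(X, ℝ) × C(X, ℝ)).1), swap_mem_ABSet p.2⟩

lemma ABSet.swap_involutive : Function.Involutive (ABSet.swap o B) :=
  fun _ => rfl

end IsometryAction

lemma tauB_nonneg (B : ℝ) (x : X) (ζ₁ : ℝ → X) (J₁ : Set ℝ) (ζ₂ : ℝ → X) (J₂ : Set ℝ) :
    0 ≤ tauB B x ζ₁ J₁ ζ₂ J₂ := by
  unfold tauB
  exact ite_nonneg ENNReal.toReal_nonneg le_rfl

lemma tauBPair_nonneg (o : X) (B : ℝ) (x : X) (α β : C(X, ℝ) × C(X, ℝ)) :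
    0 ≤ tauBPair o B x α β :=
  Real.sInf_nonneg fun _ ⟨_, _, _, _, _, _, _, _, hr⟩ => hr ▸ tauB_nonneg _ _ _ _ _ _

lemma tildeDelta_le_one (o : X) {B χ : ℝ} (hχ : 0 ≤ χ) (x : X) (α β : C(X, ℝ) × C(X, ℝ)) :
    tildeDelta o B χ x α β ≤ 1 := by
  unfold tildeDelta
  split_ifs
  · exact zero_le_one
  · exact Real.exp_le_one_iff.2 (neg_nonpos.2 (mul_nonneg hχ (tauBPair_nonneg o B x α β)))

lemma IsDeltaFamily.isBoundedMetricFamily {o : X} {B χ c₀ : ℝ}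
    {δ : X → ABSet o B → ABSet o B → ℝ} (hδ : IsDeltaFamily o B χ c₀ δ) (hχ : 0 ≤ χ) :
    IsBoundedMetricFamily χ δ := by
  obtain ⟨hnonneg, hzero, hsymm, htri, -, -, -, hcomp, hmove, -⟩ := hδ
  exact ⟨hnonneg, hzero, hsymm, htri,
    fun x α β => (hcomp x α β).2.trans (tildeDelta_le_one o hχ x α β),
    fun x y α β => (hmove x y α β).2⟩

theorem product_space_invariant_metric_general
    {X : Type} [MetricSpace X] (o : X)
    (B : ℝ) (χ c₀ : ℝ) (hχ : 0 < χ)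
    (δ : X → ↥(ABSet o B) → ↥(ABSet o B) → ℝ)
    (hδ : IsDeltaFamily o B χ c₀ δ) :
    ∃ d' : (↥(ABSet o B) × X) → (↥(ABSet o B) × X) → ℝ,
      (∀ u v, 0 ≤ d' u v) ∧ (∀ u v, d' u v = 0 ↔ u = v) ∧ (∀ u v, d' u v = d' v u) ∧
      (∀ u v w, d' u w ≤ d' u v + d' v w) ∧
      (∀ s : Set (↥(ABSet o B) × X),
        IsOpen s ↔ ∀ a ∈ s, ∃ ε > 0, ∀ b, d' a b < ε → b ∈ s) ∧
      (∀ (g : X ≃ᵢ X) (α β : ↥(ABSet o B)) (x y : X)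
          (hα : pairAct o g ↑α ∈ ABSet o B) (hβ : pairAct o g ↑β ∈ ABSet o B),
          d' (⟨pairAct o g ↑α, hα⟩, g x) (⟨pairAct o g ↑β, hβ⟩, g y) = d' (α, x) (β, y)) ∧
      (∀ (α β : ↥(ABSet o B)) (x y : X)
          (hα : ((α : C(X, ℝ) × C(X, ℝ)).2, (α : C(X, ℝ) × C(X, ℝ)).1) ∈ ABSet o B)
          (hβ : ((β : C(X, ℝ) × C(X, ℝ)).2, (β : C(X, ℝ) × C(X, ℝ)).1) ∈ ABSet o B),
          d' (⟨((α : C(X, ℝ) × C(X, ℝ)).2, (α : C(X, ℝ) × C(X, ℝ)).1), hα⟩, x)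
             (⟨((β : C(X, ℝ) × C(X, ℝ)).2, (β : C(X, ℝ) × C(X, ℝ)).1), hβ⟩, y) =
            d' (α, x) (β, y)) ∧
      ∃ c > 0, ∀ (x : X) (α β : ↥(ABSet o B)),
        c * δ x α β ≤ d' (α, x) (β, x) ∧ d' (α, x) (β, x) ≤ δ x α β := by
  have hfam := hδ.isBoundedMetricFamily hχ.le
  obtain ⟨-, -, -, -, htop, -, hswap, -, -, hisom⟩ := hδ
  refine ⟨fun u v => dist (hfam.productEmbedding u) (hfam.productEmbedding v),
    fun _ _ => dist_nonneg, fun _ _ => dist_eq_zero.trans hfam.injective_productEmbedding.eq_iff,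
    fun _ _ => dist_comm _ _, fun _ _ _ => dist_triangle _ _ _,
    hfam.isOpen_iff_isOpenByBalls_productEmbedding hχ.le htop, ?_, ?_, 1, one_pos, ?_⟩
  · intro g α β x y _ _
    exact hfam.dist_productEmbedding_map (ABSet.act o B g).surjective g
      (fun z a b => hisom g z a b _ _) (α, x) (β, y)
  · intro α β x y _ _
    exact hfam.dist_productEmbedding_map (ABSet.swap_involutive o B).surjective
      (IsometryEquiv.refl X) (fun z a b => hswap z a b _ _) (α, x) (β, y)
  · intro x α β
    dsimp only
    rw [one_mul, hfam.dist_productEmbedding_of_snd_eq]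
    exact ⟨le_rfl, le_rfl⟩

/-- Lemma `productmetric`. `𝒜(B) × X` admits a natural `Iso(X)`-invariant,
`ι`-invariant distance function `d̃` inducing the product topology, and there is `c > 0`
such that for every `x ∈ X` the restriction of `d̃` to `𝒜(B) × {x}` is pinched between
`c δ_x` and `δ_x`. -/
theorem product_space_invariant_metric
    {X : Type} [MetricSpace X] [ProperSpace X] [CAT0Space X] (o : X)
    (B : ℝ) (hB : 0 < B) (χ c₀ : ℝ) (hχ : 0 < χ) (hc₀ : 0 < c₀)
    (δ : X → ↥(ABSet o B) → ↥(ABSet o B) → ℝ)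
    (hδ : IsDeltaFamily o B χ c₀ δ) :
    ∃ d' : (↥(ABSet o B) × X) → (↥(ABSet o B) × X) → ℝ,
      (∀ u v, 0 ≤ d' u v) ∧ (∀ u v, d' u v = 0 ↔ u = v) ∧ (∀ u v, d' u v = d' v u) ∧
      (∀ u v w, d' u w ≤ d' u v + d' v w) ∧
      (∀ s : Set (↥(ABSet o B) × X),
        IsOpen s ↔ ∀ a ∈ s, ∃ ε > 0, ∀ b, d' a b < ε → b ∈ s) ∧
      (∀ (g : X ≃ᵢ X) (α β : ↥(ABSet o B)) (x y : X)
          (hα : pairAct o g ↑α ∈ ABSet o B) (hβ : pairAct o g ↑β ∈ ABSet o B),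
          d' (⟨pairAct o g ↑α, hα⟩, g x) (⟨pairAct o g ↑β, hβ⟩, g y) = d' (α, x) (β, y)) ∧
      (∀ (α β : ↥(ABSet o B)) (x y : X)
          (hα : ((α : C(X, ℝ) × C(X, ℝ)).2, (α : C(X, ℝ) × C(X, ℝ)).1) ∈ ABSet o B)
          (hβ : ((β : C(X, ℝ) × C(X, ℝ)).2, (β : C(X, ℝ) × C(X, ℝ)).1) ∈ ABSet o B),
          d' (⟨((α : C(X, ℝ) × C(X, ℝ)).2, (α : C(X, ℝ) × C(X, ℝ)).1), hα⟩, x)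
             (⟨((β : C(X, ℝ) × C(X, ℝ)).2, (β : C(X, ℝ) × C(X, ℝ)).1), hβ⟩, y) =
            d' (α, x) (β, y)) ∧
      ∃ c > 0, ∀ (x : X) (α β : ↥(ABSet o B)),
        c * δ x α β ≤ d' (α, x) (β, x) ∧ d' (α, x) (β, x) ≤ δ x α β :=
  product_space_invariant_metric_general o B χ c₀ hχ δ hδ

end
end
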